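/- Let s₁,s₂>0 and let λ∈Γ⁺_{]s₁,s₂[}. Then Σᵢ ∂F_τ/∂λᵢ lies in [√(a²+1)/((s₁+a)²−b²), n√(a²+1)/(a²−b²)] if 0<τ<π/4, in [√2/(1+s₁)², n√2] if τ=π/4, in [√(a²+1)/((s₁+a)²+b²), n√(a²+1)/(a²+b²)] if π/4<τ<π/2, and in [1/(1+s₁²), n] if τ=π/2. Moreover Σᵢ (∂F_τ/∂λᵢ)·λᵢ² lies in [s₂²√(a²+1)/((s₂+a)²−b²), n√(a²+1)] if 0<τ<π/4, in [s₂²√2/(1+s₂)², n√2] if τ=π/4, in [s₂²√(a²+1)/((s₂+a)²+b²), n√(a²+1)] if π/4<τ<π/2, and in [s₂²/(1+s₂²), n] if τ=π/2. -/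

import Mathlib

noncomputable section

open Real Set Filter Topology Matrix
open scoped Classical

namespace SBV

abbrev En (n : ℕ) := EuclideanSpace ℝ (Fin n)

/-- `i`-th partial derivative of `u` at `x`. -/
def pd {n : ℕ} (u : En n → ℝ) (i : Fin n) (x : En n) : ℝ :=
  fderiv ℝ u x (EuclideanSpace.single i 1)

/-- Gradient `Du` of `u` at `x`, as a point of Euclidean space. -/
def grad {n : ℕ} (u : En n → ℝ) (x : En n) : En n :=
  (WithLp.equiv 2 (Fin n → ℝ)).symm fun i => pd u i x

/-- Hessian matrix `D²u` of `u` at `x`. -/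
def Hess {n : ℕ} (u : En n → ℝ) (x : En n) : Matrix (Fin n) (Fin n) ℝ :=
  Matrix.of fun i j => pd (fun y => pd u j y) i x

/-- `lam` is a vector of eigenvalues of the symmetric matrix `A`. -/
def IsEigs {n : ℕ} (A : Matrix (Fin n) (Fin n) ℝ) (lam : Fin n → ℝ) : Prop :=
  ∃ P : Matrix (Fin n) (Fin n) ℝ, Pᵀ * P = 1 ∧ A = P * Matrix.diagonal lam * Pᵀ

/-- The positive cone `Γ⁺_n`. -/
def PosCone (n : ℕ) : Set (Fin n → ℝ) := {lam | ∀ i, 0 < lam i}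

/-- `i`-th partial derivative of a function of `n` real variables. -/
def pdF {n : ℕ} (F : (Fin n → ℝ) → ℝ) (i : Fin n) (lam : Fin n → ℝ) : ℝ :=
  fderiv ℝ F lam (Pi.single i 1)

/-- Second partial derivatives of a function of `n` real variables. -/
def pdF2 {n : ℕ} (F : (Fin n → ℝ) → ℝ) (i j : Fin n) (lam : Fin n → ℝ) : ℝ :=
  fderiv ℝ (pdF F j) lam (Pi.single i 1)

/-- `h` is a defining function of the uniformly convex domain `Ω` with convexity constant `θ`. -/
def IsDefiningFn {n : ℕ} (Ω : Set (En n)) (h : En n → ℝ) (θ : ℝ) : Prop :=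
  ContDiff ℝ (⊤ : ℕ∞) h ∧ Ω = {p | 0 < h p} ∧
  (∀ p ∈ frontier Ω, ‖grad h p‖ = 1) ∧
  (∀ p ∈ closure Ω, ∀ ξ : Fin n → ℝ,
    ∑ i, ∑ j, Hess h p i j * ξ i * ξ j ≤ -θ * ∑ i, ξ i ^ 2)

/-- Uniformly convex bounded domain with smooth boundary. -/
def UCDomain {n : ℕ} (Ω : Set (En n)) : Prop :=
  Ω.Nonempty ∧ IsOpen Ω ∧ Bornology.IsBounded Ω ∧ Convex ℝ Ω ∧
    ∃ h θ, 0 < θ ∧ IsDefiningFn Ω h θ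

/-- The operator `F_τ` of the Lagrangian mean curvature equation. -/
def Ftau {n : ℕ} (τ : ℝ) (lam : Fin n → ℝ) : ℝ :=
  if τ < π / 4 then
    Real.sqrt (Real.cot τ ^ 2 + 1) / (2 * Real.sqrt |Real.cot τ ^ 2 - 1|) *
      ∑ i, Real.log ((lam i + Real.cot τ - Real.sqrt |Real.cot τ ^ 2 - 1|) /
        (lam i + Real.cot τ + Real.sqrt |Real.cot τ ^ 2 - 1|))
  else if τ = π / 4 then -Real.sqrt 2 * ∑ i, (1 + lam i)⁻¹
  else if τ < π / 2 then
    Real.sqrt (Real.cot τ ^ 2 + 1) / Real.sqrt |Real.cot τ ^ 2 - 1| *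
      ∑ i, Real.arctan ((lam i + Real.cot τ - Real.sqrt |Real.cot τ ^ 2 - 1|) /
        (lam i + Real.cot τ + Real.sqrt |Real.cot τ ^ 2 - 1|))
  else ∑ i, Real.arctan (lam i)

/-- First derivative `∂F_τ/∂λᵢ` as a function of the single entry `l = λᵢ`. -/
def dFtau (τ l : ℝ) : ℝ :=
  if τ < π / 4 then
    Real.sqrt (Real.cot τ ^ 2 + 1) /
      ((l + Real.cot τ) ^ 2 - Real.sqrt |Real.cot τ ^ 2 - 1| ^ 2)
  else if τ = π / 4 then Real.sqrt 2 / (1 + l) ^ 2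
  else if τ < π / 2 then
    Real.sqrt (Real.cot τ ^ 2 + 1) /
      ((l + Real.cot τ) ^ 2 + Real.sqrt |Real.cot τ ^ 2 - 1| ^ 2)
  else 1 / (1 + l ^ 2)

/-- Diagonal second derivative `∂²F_τ/∂λᵢ²` as a function of `l = λᵢ`. -/
def d2Ftau (τ l : ℝ) : ℝ :=
  if τ < π / 4 then
    -2 * Real.sqrt (Real.cot τ ^ 2 + 1) * (l + Real.cot τ) /
      ((l + Real.cot τ) ^ 2 - Real.sqrt |Real.cot τ ^ 2 - 1| ^ 2) ^ 2
  else if τ = π / 4 then -2 * Real.sqrt 2 / (1 + l) ^ 3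
  else if τ < π / 2 then
    -2 * Real.sqrt (Real.cot τ ^ 2 + 1) * (l + Real.cot τ) /
      ((l + Real.cot τ) ^ 2 + Real.sqrt |Real.cot τ ^ 2 - 1| ^ 2) ^ 2
  else -2 * l / (1 + l ^ 2) ^ 2

/-- The value `F_τ(0,…,0)`. -/
def FtauZero (n : ℕ) (τ : ℝ) : ℝ :=
  if τ < π / 4 then
    n * Real.sqrt (Real.cot τ ^ 2 + 1) / (2 * Real.sqrt |Real.cot τ ^ 2 - 1|) *
      Real.log ((Real.cot τ - Real.sqrt |Real.cot τ ^ 2 - 1|) /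
        (Real.cot τ + Real.sqrt |Real.cot τ ^ 2 - 1|))
  else if τ = π / 4 then -Real.sqrt 2 * n
  else if τ < π / 2 then
    n * Real.sqrt (Real.cot τ ^ 2 + 1) / Real.sqrt |Real.cot τ ^ 2 - 1| *
      Real.arctan ((Real.cot τ - Real.sqrt |Real.cot τ ^ 2 - 1|) /
        (Real.cot τ + Real.sqrt |Real.cot τ ^ 2 - 1|))
  else 0

/-- The value `F_τ(+∞,…,+∞)`. -/
def FtauTop (n : ℕ) (τ : ℝ) : ℝ :=
  if τ ≤ π / 4 then 0
  else if τ < π / 2 then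
    n * π * Real.sqrt (Real.cot τ ^ 2 + 1) / (4 * Real.sqrt |Real.cot τ ^ 2 - 1|)
  else n * π / 2

/-- The dual operator `F̃_τ(μ) = -F_τ(1/μ)`. -/
def Ftaud {n : ℕ} (τ : ℝ) (mu : Fin n → ℝ) : ℝ := -Ftau τ fun i => (mu i)⁻¹

/-- Diagonal second derivative `∂²F̃_τ/∂μᵢ²` as a function of `m = μᵢ`. -/
def d2Ftaud (τ m : ℝ) : ℝ :=
  if τ < π / 4 then
    -2 * Real.sqrt (Real.cot τ ^ 2 + 1) * (m + Real.cot τ) /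
      ((1 + Real.cot τ * m) ^ 2 - (Real.sqrt |Real.cot τ ^ 2 - 1| * m) ^ 2) ^ 2
  else if τ = π / 4 then -2 * Real.sqrt 2 / (1 + m) ^ 3
  else if τ < π / 2 then
    -2 * Real.sqrt (Real.cot τ ^ 2 + 1) * (m + Real.cot τ) /
      ((1 + Real.cot τ * m) ^ 2 + (Real.sqrt |Real.cot τ ^ 2 - 1| * m) ^ 2) ^ 2
  else -2 * m / (1 + m ^ 2) ^ 2

/-- `u` solves the flow `∂u/∂t = F(λ(D²u)) - f` with second boundary condition
`Du(Ω) = Ω̃` and initial value `u₀`, for times in `I`. -/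
def SolvesFlow {n : ℕ} (F : (Fin n → ℝ) → ℝ) (f : En n → ℝ) (Ω Ωt : Set (En n))
    (u₀ : En n → ℝ) (u : ℝ → En n → ℝ) (I : Set ℝ) : Prop :=
  (∀ t ∈ I, ∀ x ∈ Ω, ∃ lam ∈ PosCone n,
      IsEigs (Hess (u t) x) lam ∧ HasDerivAt (fun s => u s x) (F lam - f x) t) ∧
  (∀ t ∈ I, grad (u t) '' Ω = Ωt) ∧
  ∀ x ∈ closure Ω, u 0 x = u₀ x

/-- `u` solves the flow with the boundary condition expressed through the defining
function `h` of the target domain: `h(Du) = 0` on `∂Ω`. -/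
def SolvesFlowBC {n : ℕ} (F : (Fin n → ℝ) → ℝ) (f h : En n → ℝ) (Ω : Set (En n))
    (u₀ : En n → ℝ) (u : ℝ → En n → ℝ) (T : ℝ) : Prop :=
  (∀ t ∈ Ioc 0 T, ∀ x ∈ Ω, ∃ lam ∈ PosCone n,
      IsEigs (Hess (u t) x) lam ∧ HasDerivAt (fun s => u s x) (F lam - f x) t) ∧
  (∀ t ∈ Ioc 0 T, ∀ x ∈ frontier Ω, h (grad (u t) x) = 0) ∧
  ∀ x ∈ closure Ω, u 0 x = u₀ x

/-- `ut` solves the dual (Legendre-transformed) flow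
`∂ũ/∂t = F̃(λ(D²ũ)) + f(Dũ)` on `Ω̃`, with `h̃(Dũ) = 0` on `∂Ω̃`. -/
def SolvesDualFlow {n : ℕ} (Ft : (Fin n → ℝ) → ℝ) (f ht : En n → ℝ) (Ωt : Set (En n))
    (ut₀ : En n → ℝ) (ut : ℝ → En n → ℝ) (T : ℝ) : Prop :=
  (∀ t ∈ Ioc 0 T, ∀ y ∈ Ωt, ∃ mu ∈ PosCone n,
      IsEigs (Hess (ut t) y) mu ∧
      HasDerivAt (fun s => ut s y) (Ft mu + f (grad (ut t) y)) t) ∧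
  (∀ t ∈ Ioc 0 T, ∀ y ∈ frontier Ωt, ht (grad (ut t) y) = 0) ∧
  ∀ y ∈ closure Ωt, ut 0 y = ut₀ y

/-- The solution is strictly convex in the space variable for times in `I`. -/
def StrictlyConvexSol {n : ℕ} (Ω : Set (En n)) (u : ℝ → En n → ℝ) (I : Set ℝ) : Prop :=
  ∀ t ∈ I, ∀ x ∈ Ω, (Hess (u t) x).PosDef

/-- Structure conditions (i)-(v) of the paper for the operator `F`, with limit values
`F0 = F(0,…,0)` and `Finf = F(+∞,…,+∞)`. -/
def StructCond {n : ℕ} (F : (Fin n → ℝ) → ℝ) (F0 Finf : ℝ) : Prop :=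
  (∀ lam ∈ PosCone n, ∀ σ : Equiv.Perm (Fin n), F (lam ∘ σ) = F lam) ∧
  ContDiffOn ℝ 2 F (PosCone n) ∧
  Tendsto (fun l : ℝ => F fun _ => l) (𝓝[>] 0) (𝓝 F0) ∧
  Tendsto (fun l : ℝ => F fun _ => l) atTop (𝓝 Finf) ∧
  F0 < Finf ∧
  (∀ lam ∈ PosCone n, ∀ i, 0 < pdF F i lam) ∧
  (∀ lam ∈ PosCone n, ∀ ξ : Fin n → ℝ,
      ∑ i, ∑ j, pdF2 F i j lam * ξ i * ξ j ≤ 0) ∧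
  (∀ mu ∈ PosCone n, ∀ ξ : Fin n → ℝ,
      ∑ i, ∑ j, pdF2 (fun m => -F fun k => (m k)⁻¹) i j mu * ξ i * ξ j ≤ 0) ∧
  (∀ s₁ s₂ : ℝ, 0 < s₁ → 0 < s₂ → ∃ L₁ L₂ : ℝ, 0 < L₁ ∧ 0 < L₂ ∧
      ∀ lam ∈ PosCone n, (∃ i, lam i ≤ s₁) → (∃ i, s₂ ≤ lam i) →
        L₁ ≤ ∑ i, pdF F i lam ∧ (∑ i, pdF F i lam) ≤ L₂ ∧
        L₁ ≤ ∑ i, pdF F i lam * lam i ^ 2 ∧ (∑ i, pdF F i lam * lam i ^ 2) ≤ L₂)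

/-- Membership in the class `𝒜_δ`: concave, `C²`, and oscillation at most `δ`. -/
def InA {n : ℕ} (Ω : Set (En n)) (δ : ℝ) (f : En n → ℝ) : Prop :=
  ContDiffOn ℝ 2 f (closure Ω) ∧ ConcaveOn ℝ (closure Ω) f ∧
  ∀ x ∈ closure Ω, ∀ y ∈ closure Ω, |f x - f y| ≤ δ

/-- Admissibility of `δ` relative to the initial datum:
`δ < min{Finf - max F(λ(D²u₀)), min F(λ(D²u₀)) - F0}`. -/
def DeltaAdm {n : ℕ} (Ω : Set (En n)) (F : (Fin n → ℝ) → ℝ) (F0 Finf : ℝ)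
    (u₀ : En n → ℝ) (δ : ℝ) : Prop :=
  0 < δ ∧ ∃ g₀ : En n → ℝ,
    (∀ x ∈ closure Ω, ∃ lam ∈ PosCone n, IsEigs (Hess u₀ x) lam ∧ g₀ x = F lam) ∧
    δ < Finf - sSup (g₀ '' closure Ω) ∧ δ < sInf (g₀ '' closure Ω) - F0

/-- The initial datum is uniformly convex with `Du₀(Ω) = Ω̃`. -/
def GoodInit {n : ℕ} (Ω Ωt : Set (En n)) (u₀ : En n → ℝ) : Prop :=
  ContDiffOn ℝ 2 u₀ (closure Ω) ∧ (∀ x ∈ closure Ω, (Hess u₀ x).PosDef) ∧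
  grad u₀ '' Ω = Ωt

/-- Two-sided bounds `Λ₁ ≤ Σᵢ ∂F/∂λᵢ ≤ Λ₂` and `Λ₁ ≤ Σᵢ (∂F/∂λᵢ)λᵢ² ≤ Λ₂`
along the flow. -/
def FlowBounds {n : ℕ} (F : (Fin n → ℝ) → ℝ) (Ω : Set (En n)) (u : ℝ → En n → ℝ)
    (T Λ₁ Λ₂ : ℝ) : Prop :=
  ∀ t ∈ Ioc 0 T, ∀ x ∈ Ω, ∀ lam ∈ PosCone n, IsEigs (Hess (u t) x) lam →
    Λ₁ ≤ ∑ i, pdF F i lam ∧ (∑ i, pdF F i lam) ≤ Λ₂ ∧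
    Λ₁ ≤ ∑ i, pdF F i lam * lam i ^ 2 ∧ (∑ i, pdF F i lam * lam i ^ 2) ≤ Λ₂

/-- Supremum of a real-valued function on a set. -/
def supO {α : Type*} (s : Set α) (g : α → ℝ) : ℝ := sSup (g '' s)

/-- Hölder seminorm `[v]_γ` on a set `s`. -/
def hSemi {E F : Type*} [NormedAddCommGroup E] [NormedAddCommGroup F]
    (γ : ℝ) (s : Set E) (v : E → F) : ℝ :=
  sSup {C | ∃ x ∈ s, ∃ y ∈ s, x ≠ y ∧ C = ‖v x - v y‖ / ‖x - y‖ ^ γ}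

/-- The `C^{k+γ}` norm on a set `s`. -/
def cNormK {n : ℕ} (k : ℕ) (γ : ℝ) (s : Set (En n)) (w : En n → ℝ) : ℝ :=
  (∑ j ∈ Finset.range (k + 1), supO s fun x => ‖iteratedFDeriv ℝ j w x‖) +
    hSemi γ s (iteratedFDeriv ℝ k w)

/-- Parabolic Hölder seminorm `[v]_{γ,γ/2}` on a space-time set `Q`. -/
def pSemi {n : ℕ} {F : Type*} [NormedAddCommGroup F] (γ : ℝ) (Q : Set (En n × ℝ))
    (v : En n × ℝ → F) : ℝ :=
  sSup {C | ∃ p ∈ Q, ∃ q ∈ Q, p ≠ q ∧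
    C = ‖v p - v q‖ / (‖p.1 - q.1‖ ^ γ + |p.2 - q.2| ^ (γ / 2))}

/-- Parabolic Hölder norm `‖v‖_{C^{γ,γ/2}(Q)}`. -/
def pNormC {n : ℕ} {F : Type*} [NormedAddCommGroup F] (γ : ℝ) (Q : Set (En n × ℝ))
    (v : En n × ℝ → F) : ℝ :=
  supO Q (fun p => ‖v p‖) + pSemi γ Q v

/-- Membership in the parabolic class `C^{2+γ,(2+γ)/2}(Q)`. -/
def InParaC2 {n : ℕ} (γ : ℝ) (Q : Set (En n × ℝ)) (u : ℝ → En n → ℝ) : Prop :=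
  ContinuousOn (fun p : En n × ℝ => u p.2 p.1) Q ∧
  ∃ K : ℝ,
    (∀ p ∈ Q, ∀ q ∈ Q,
      ‖iteratedFDeriv ℝ 2 (u p.2) p.1 - iteratedFDeriv ℝ 2 (u q.2) q.1‖ ≤
        K * (‖p.1 - q.1‖ ^ γ + |p.2 - q.2| ^ (γ / 2))) ∧
    (∀ p ∈ Q, ∀ q ∈ Q,
      |deriv (fun s => u s p.1) p.2 - deriv (fun s => u s q.1) q.2| ≤
        K * (‖p.1 - q.1‖ ^ γ + |p.2 - q.2| ^ (γ / 2)))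

/-!
Each `F_τ` is a sum `Σᵢ f_τ(λᵢ)` of a one-variable profile, and in all four regimes
`f_τ'(l) = √(a² + 1) / (l² + 2al + 1)` with `a = cot τ ≥ 0`, since `(l + a)² ∓ b² = l² + 2al + 1`.
On `[0, ∞)` this is positive and decreasing, while `l² f_τ'(l)` is increasing and bounded by
`√(a² + 1)`. The lower bounds come from the single index with `λᵢ ≤ s₁` (resp. `λᵢ ≥ s₂`), the
upper bounds from estimating each term.
-/

lemma cot_nonneg {τ : ℝ} (h₀ : 0 < τ) (h₁ : τ ≤ π / 2) : 0 ≤ cot τ := by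
  rw [cot_eq_cos_div_sin]
  exact div_nonneg (cos_nonneg_of_mem_Icc ⟨by linarith, h₁⟩)
    (sin_pos_of_pos_of_lt_pi h₀ (by linarith)).le

lemma one_lt_cot {τ : ℝ} (h₀ : 0 < τ) (h₁ : τ < π / 4) : 1 < cot τ := by
  have hpos := tan_pos_of_pos_of_lt_pi_div_two h₀ (by linarith)
  have hlt : tan τ < 1 :=
    tan_pi_div_four ▸ tan_lt_tan_of_lt_of_lt_pi_div_two (by linarith) (by linarith) h₁
  rw [← tan_inv_eq_cot]
  exact one_lt_inv₀ hpos |>.2 hlt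

lemma cot_lt_one {τ : ℝ} (h₀ : π / 4 < τ) (h₁ : τ < π / 2) : cot τ < 1 := by
  have hgt : 1 < tan τ :=
    tan_pi_div_four ▸ tan_lt_tan_of_lt_of_lt_pi_div_two (by linarith [pi_pos]) h₁ h₀
  rw [← tan_inv_eq_cot]
  exact inv_lt_one_of_one_lt₀ hgt

lemma cot_pi_div_four : cot (π / 4) = 1 := by
  rw [← tan_inv_eq_cot, tan_pi_div_four, inv_one]

lemma cot_pi_div_two : cot (π / 2) = 0 := by
  simp [cot_eq_cos_div_sin]

lemma pdF_sum_comp {n : ℕ} {φ φ' : ℝ → ℝ} (lam : Fin n → ℝ)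
    (h : ∀ j, HasDerivAt φ (φ' (lam j)) (lam j)) (i : Fin n) :
    pdF (fun l : Fin n → ℝ => ∑ j, φ (l j)) i lam = φ' (lam i) := by
  have H : HasFDerivAt (fun l : Fin n → ℝ => ∑ j, φ (l j))
      (∑ j, φ' (lam j) • ContinuousLinearMap.proj (R := ℝ) (φ := fun _ : Fin n => ℝ) j) lam :=
    HasFDerivAt.fun_sum fun j _ => (h j).comp_hasFDerivAt lam (hasFDerivAt_apply j lam)
  simp [pdF, H.fderiv, Pi.single_apply]

lemma hasDerivAt_log_div_shift {a b x : ℝ} (hu : 0 < x + a - b) (hv : 0 < x + a + b) :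
    HasDerivAt (fun x => log ((x + a - b) / (x + a + b))) (2 * b / ((x + a) ^ 2 - b ^ 2)) x := by
  have hquot := (((hasDerivAt_id x).add_const a).sub_const b).div
    (((hasDerivAt_id x).add_const a).add_const b) hv.ne'
  have hden : (x + a) ^ 2 - b ^ 2 ≠ 0 := by nlinarith [mul_pos hu hv]
  refine (hquot.log (div_pos hu hv).ne').congr_deriv ?_
  simp only [id, Pi.div_apply]
  field_simp
  ring

lemma hasDerivAt_arctan_div_shift {a b x : ℝ} (hv : x + a + b ≠ 0) :
    HasDerivAt (fun x => arctan ((x + a - b) / (x + a + b))) (b / ((x + a) ^ 2 + b ^ 2)) x := by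
  have hquot := (((hasDerivAt_id x).add_const a).sub_const b).div
    (((hasDerivAt_id x).add_const a).add_const b) hv
  have hden : (x + a) ^ 2 + b ^ 2 ≠ 0 := by
    have : 0 < (x + a + b) ^ 2 := by positivity
    nlinarith [sq_nonneg (x + a - b)]
  refine hquot.arctan.congr_deriv ?_
  simp only [id, Pi.div_apply]
  field_simp
  ring

def ftau (τ l : ℝ) : ℝ :=
  if τ < π / 4 then
    √(cot τ ^ 2 + 1) / (2 * √|cot τ ^ 2 - 1|) *
      log ((l + cot τ - √|cot τ ^ 2 - 1|) / (l + cot τ + √|cot τ ^ 2 - 1|))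
  else if τ = π / 4 then -√2 * (1 + l)⁻¹
  else if τ < π / 2 then
    √(cot τ ^ 2 + 1) / √|cot τ ^ 2 - 1| *
      arctan ((l + cot τ - √|cot τ ^ 2 - 1|) / (l + cot τ + √|cot τ ^ 2 - 1|))
  else arctan l

lemma Ftau_eq_sum_ftau {n : ℕ} (τ : ℝ) :
    (Ftau τ : (Fin n → ℝ) → ℝ) = fun lam => ∑ i, ftau τ (lam i) := by
  funext lam
  unfold Ftau ftau
  split_ifs <;> simp [Finset.mul_sum]

lemma hasDerivAt_ftau {τ l : ℝ} (hτ : τ ∈ Ioc 0 (π / 2)) (hl : 0 ≤ l) :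
    HasDerivAt (ftau τ) (dFtau τ l) l := by
  unfold ftau dFtau
  set a := cot τ
  set b := √|a ^ 2 - 1|
  have ha₀ : 0 ≤ a := cot_nonneg hτ.1 hτ.2
  split_ifs with h₁ h₂ h₃
  · have ha : 1 < a := one_lt_cot hτ.1 h₁
    have hb : 0 < b := sqrt_pos.2 (abs_pos.2 (by nlinarith))
    have hb2 : b ^ 2 = a ^ 2 - 1 := by rw [sq_sqrt (abs_nonneg _), abs_of_pos (by nlinarith)]
    have hba : b < a := by nlinarith
    refine ((hasDerivAt_log_div_shift (by linarith) (by linarith)).const_mul _).congr_deriv ?_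
    field_simp
  · have hl' : (1 : ℝ) + l ≠ 0 := by linarith
    refine ((((hasDerivAt_id l).const_add 1).inv hl').const_mul _).congr_deriv ?_
    simp only [id]
    ring
  · have ha : a < 1 := cot_lt_one (lt_of_le_of_ne (not_lt.1 h₁) (Ne.symm h₂)) h₃
    have hb : 0 < b := sqrt_pos.2 (abs_pos.2 (by nlinarith))
    refine ((hasDerivAt_arctan_div_shift (by linarith)).const_mul _).congr_deriv ?_
    field_simp
  · exact hasDerivAt_arctan l |>.congr_deriv (by ring)

lemma pdF_Ftau {n : ℕ} {τ : ℝ} (hτ : τ ∈ Ioc 0 (π / 2)) {lam : Fin n → ℝ}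
    (hlam : lam ∈ PosCone n) (i : Fin n) : pdF (Ftau τ) i lam = dFtau τ (lam i) := by
  rw [Ftau_eq_sum_ftau]
  exact pdF_sum_comp lam (fun j => hasDerivAt_ftau hτ (hlam j).le) i

lemma dFtau_eq {τ : ℝ} (hτ : τ ∈ Ioc 0 (π / 2)) (l : ℝ) :
    dFtau τ l = √(cot τ ^ 2 + 1) / (l ^ 2 + 2 * cot τ * l + 1) := by
  have hb2 : √|cot τ ^ 2 - 1| ^ 2 = |cot τ ^ 2 - 1| := sq_sqrt (abs_nonneg _)
  unfold dFtau
  split_ifs with h₁ h₂ h₃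
  · rw [hb2, abs_of_pos (by nlinarith [one_lt_cot hτ.1 h₁])]
    ring
  · rw [h₂, cot_pi_div_four, one_pow, one_add_one_eq_two]
    ring
  · have h₂' : π / 4 < τ := lt_of_le_of_ne (not_lt.1 h₁) (Ne.symm h₂)
    rw [hb2, abs_of_neg (by nlinarith [cot_lt_one h₂' h₃, cot_nonneg hτ.1 hτ.2])]
    ring
  · rw [le_antisymm hτ.2 (not_lt.1 h₃), cot_pi_div_two]
    simp [add_comm]

lemma sum_le_natCast_mul {n : ℕ} {f : Fin n → ℝ} {c : ℝ} (h : ∀ j, f j ≤ c) :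
    ∑ j, f j ≤ n * c := by
  simpa using Finset.sum_le_card_nsmul Finset.univ f c fun j _ => h j

section QuadraticProfile

variable {a K : ℝ}

lemma quadratic_pos (ha : 0 ≤ a) {l : ℝ} (hl : 0 ≤ l) : 0 < l ^ 2 + 2 * a * l + 1 := by
  positivity

lemma div_quadratic_antitoneOn (ha : 0 ≤ a) (hK : 0 ≤ K) :
    AntitoneOn (fun l => K / (l ^ 2 + 2 * a * l + 1)) (Ici 0) := by
  intro l hl m _ hlm
  have hgap : 0 ≤ a * (m - l) := mul_nonneg ha (sub_nonneg.2 hlm)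
  exact div_le_div_of_nonneg_left hK (quadratic_pos ha hl) (by nlinarith [mem_Ici.1 hl])

lemma div_quadratic_mul_sq_monotoneOn (ha : 0 ≤ a) (hK : 0 ≤ K) :
    MonotoneOn (fun l => K / (l ^ 2 + 2 * a * l + 1) * l ^ 2) (Ici 0) := by
  intro l hl m hm hlm
  rw [mem_Ici] at hl hm
  simp only [div_mul_eq_mul_div]
  rw [div_le_div_iff₀ (quadratic_pos ha hl) (quadratic_pos ha hm)]
  have hml : 0 ≤ m - l := sub_nonneg.2 hlm
  have hcross : 0 ≤ a * (l * (m * (m - l))) := by positivity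
  nlinarith [mul_nonneg hK hcross, mul_nonneg hK (mul_nonneg hml (add_nonneg hl hm))]

lemma div_quadratic_mul_sq_le (ha : 0 ≤ a) (hK : 0 ≤ K) {l : ℝ} (hl : 0 ≤ l) :
    K / (l ^ 2 + 2 * a * l + 1) * l ^ 2 ≤ K := by
  rw [div_mul_eq_mul_div, div_le_iff₀ (quadratic_pos ha hl)]
  nlinarith [mul_nonneg hK (by positivity : 0 ≤ 2 * a * l + 1)]

end QuadraticProfile

theorem stmt_4_general (n : ℕ) (τ s₁ s₂ : ℝ) (hτ : τ ∈ Ioc 0 (π / 2))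
    (hs₂ : 0 < s₂)
    (lam : Fin n → ℝ) (hlam : lam ∈ PosCone n)
    (hmin : ∃ i, lam i ≤ s₁) (hmax : ∃ i, s₂ ≤ lam i) :
    (dFtau τ s₁ ≤ ∑ i, pdF (Ftau τ) i lam ∧
      (∑ i, pdF (Ftau τ) i lam) ≤ n * dFtau τ 0) ∧
    (s₂ ^ 2 * dFtau τ s₂ ≤ ∑ i, pdF (Ftau τ) i lam * lam i ^ 2 ∧
      (∑ i, pdF (Ftau τ) i lam * lam i ^ 2) ≤
        n * (if τ < π / 2 then Real.sqrt (Real.cot τ ^ 2 + 1) else 1)) := by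
  have hK_ite : (if τ < π / 2 then √(cot τ ^ 2 + 1) else 1) = √(cot τ ^ 2 + 1) := by
    split_ifs with h
    · rfl
    · simp [le_antisymm hτ.2 (not_lt.1 h), cot_pi_div_two]
  simp only [pdF_Ftau hτ hlam, dFtau_eq hτ, hK_ite]
  have ha : 0 ≤ cot τ := cot_nonneg hτ.1 hτ.2
  have hK : 0 ≤ √(cot τ ^ 2 + 1) := sqrt_nonneg _
  have hlam₀ : ∀ j, lam j ∈ Ici 0 := fun j => (hlam j).le
  have hterm : ∀ j, 0 ≤ √(cot τ ^ 2 + 1) / (lam j ^ 2 + 2 * cot τ * lam j + 1) :=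
    fun j => div_nonneg hK (quadratic_pos ha (hlam₀ j)).le
  obtain ⟨i, hi⟩ := hmin
  obtain ⟨k, hk⟩ := hmax
  refine ⟨⟨?_, ?_⟩, ?_, ?_⟩
  · refine (div_quadratic_antitoneOn ha hK (hlam₀ i) ((hlam₀ i).trans hi) hi).trans ?_
    exact Finset.single_le_sum (fun j _ => hterm j) (Finset.mem_univ i)
  · exact sum_le_natCast_mul fun j =>
      div_quadratic_antitoneOn ha hK self_mem_Ici (hlam₀ j) (hlam₀ j)
  · rw [mul_comm]
    refine (div_quadratic_mul_sq_monotoneOn ha hK hs₂.le (hlam₀ k) hk).trans ?_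
    exact Finset.single_le_sum (fun j _ => mul_nonneg (hterm j) (sq_nonneg _))
      (Finset.mem_univ k)
  · exact sum_le_natCast_mul fun j => div_quadratic_mul_sq_le ha hK (hlam₀ j)

/-- On `Γ⁺_{]s₁,s₂[}` the sums `Σᵢ ∂F_τ/∂λᵢ` and
`Σᵢ (∂F_τ/∂λᵢ)λᵢ²` lie in the explicit intervals of the paper
(expressed here uniformly through `dFtau`). -/
theorem stmt_4 (n : ℕ) (τ s₁ s₂ : ℝ) (hτ : τ ∈ Ioc 0 (π / 2))
    (hs₁ : 0 < s₁) (hs₂ : 0 < s₂)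
    (lam : Fin n → ℝ) (hlam : lam ∈ PosCone n)
    (hmin : ∃ i, lam i ≤ s₁) (hmax : ∃ i, s₂ ≤ lam i) :
    (dFtau τ s₁ ≤ ∑ i, pdF (Ftau τ) i lam ∧
      (∑ i, pdF (Ftau τ) i lam) ≤ n * dFtau τ 0) ∧
    (s₂ ^ 2 * dFtau τ s₂ ≤ ∑ i, pdF (Ftau τ) i lam * lam i ^ 2 ∧
      (∑ i, pdF (Ftau τ) i lam * lam i ^ 2) ≤
        n * (if τ < π / 2 then Real.sqrt (Real.cot τ ^ 2 + 1) else 1)) :=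
  stmt_4_general n τ s₁ s₂ hτ hs₂ lam hlam hmin hmax

end SBV
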